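/- Let X be a Hausdorff CoPolish space that is Fréchet–Urysohn, and suppose the set X_nc = {x ∈ X | x has no countable neighborhood basis} is nonempty. Then there is a closed topological embedding of T_min into X (a topological embedding e : T_min → X whose range is closed in X). -/

import Mathlib

/-- The topology of the space `T_min` on `Option (ℕ × ℕ)`: a set `U` is open iff,
whenever `none ∈ U`, there is `ℓ : ℕ → ℕ` with `some (a, b) ∈ U` for all `a` and all
`b ≥ ℓ a` (in particular every singleton `{some (a, b)}` is open). -/
def TminTop : TopologicalSpace (Option (ℕ × ℕ)) where
  IsOpen U := none ∈ U → ∃ ℓ : ℕ → ℕ, ∀ a b : ℕ, ℓ a ≤ b → some (a, b) ∈ U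
  isOpen_univ := fun _ => ⟨fun _ => 0, fun _ _ _ => trivial⟩
  isOpen_inter := by
    intro U V hU hV hmem
    obtain ⟨ℓ₁, h₁⟩ := hU hmem.1
    obtain ⟨ℓ₂, h₂⟩ := hV hmem.2
    exact ⟨fun a => max (ℓ₁ a) (ℓ₂ a), fun a b hb =>
      ⟨h₁ a b (le_trans (le_max_left _ _) hb), h₂ a b (le_trans (le_max_right _ _) hb)⟩⟩
  isOpen_sUnion := by
    intro S hS hmem
    obtain ⟨U, hU, hnU⟩ := hmem
    obtain ⟨ℓ, hℓ⟩ := hS U hU hnU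
    exact ⟨ℓ, fun a b hb => ⟨U, hU, hℓ a b hb⟩⟩

/-- A topological space is CoPolish if it is the direct limit of a monotone sequence of
compact metrizable subspaces. -/
def CoPolish (X : Type*) [TopologicalSpace X] : Prop :=
  ∃ K : ℕ → Set X, Monotone K ∧ (∀ n, IsCompact (K n)) ∧
    (∀ n, TopologicalSpace.MetrizableSpace (K n)) ∧
    (⋃ n, K n) = Set.univ ∧
    ∀ U : Set X, IsOpen U ↔ ∀ n, IsOpen ((Subtype.val : K n → X) ⁻¹' U)

/-!
Let `x` be a point without countable neighbourhood basis. Since each `K n` is metrizable, no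
`K n` is a neighbourhood of `x`, so by the Fréchet–Urysohn property there are injective sequences
converging to `x` that avoid any prescribed `K n`. A convergent sequence together with its limit
is compact, and compact sets lie in a single `K n`; iterating, we get columns `s a` converging to
`x` with `s a b ∈ K n → a < n`. The map `T_min → X` sending `none` to `x` and `some (a, b)` to
`s a b` is then continuous and injective, and it is closed because its restriction to the
preimage of each `K n` factors through the compact set of the first `n` columns of `T_min`.
-/

open Filter Function Set Topology

section Coherent

variable {X : Type*} [TopologicalSpace X]

theorem Topology.IsCoherentWith.isClosed_of_finite_inter [T1Space X] {S : Set (Set X)}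
    (hS : IsCoherentWith S) {t : Set X} (ht : ∀ s ∈ S, (t ∩ s).Finite) : IsClosed t :=
  hS.isClosed_iff.2 fun s hs =>
    Subtype.preimage_coe_inter_self s t ▸ (ht s hs).isClosed.preimage continuous_subtype_val

theorem Topology.IsCoherentWith.isClosedMap [T2Space X] {Y : Type*} [TopologicalSpace Y]
    {S : Set (Set X)} (hS : IsCoherentWith S) {f : Y → X} (hf : Continuous f)
    (hfS : ∀ s ∈ S, ∃ C, IsCompact C ∧ f ⁻¹' s ⊆ C) : IsClosedMap f := by
  intro F hF
  refine hS.isClosed_iff.2 fun s hs => ?_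
  obtain ⟨C, hC, hsC⟩ := hfS s hs
  have hsub : f '' F ∩ s ⊆ f '' (F ∩ C) := by
    rintro _ ⟨⟨p, hp, rfl⟩, hps⟩
    exact ⟨p, ⟨hp, hsC hps⟩, rfl⟩
  have heq : f '' F ∩ s = f '' (F ∩ C) ∩ s :=
    (subset_inter hsub inter_subset_right).antisymm
      (inter_subset_inter_left _ (image_mono inter_subset_left))
  rw [← Subtype.preimage_coe_inter_self, heq, Subtype.preimage_coe_inter_self]
  exact ((hC.inter_left hF).image hf).isClosed.preimage continuous_subtype_val

theorem Topology.IsCoherentWith.exists_subset_of_isCompact [T1Space X] {K : ℕ → Set X}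
    (hS : IsCoherentWith (range K)) (hK : Monotone K) (hcov : ⋃ n, K n = univ)
    {C : Set X} (hC : IsCompact C) : ∃ n, C ⊆ K n := by
  by_contra! hC'
  choose c hcC hcK using fun n => not_subset.1 (hC' n)
  have hlt : ∀ k n, c k ∈ K n → k < n := fun k n hk =>
    lt_of_not_ge fun hnk => hcK k (hK hnk hk)
  set t : ℕ → Set X := fun j => c '' Ici j
  have ht_closed : ∀ j, IsClosed (t j) := fun j => hS.isClosed_of_finite_inter <| by
    rintro _ ⟨n, rfl⟩
    refine ((finite_Iio n).image c).subset ?_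
    rintro _ ⟨⟨k, -, rfl⟩, hk⟩
    exact mem_image_of_mem c (hlt k n hk)
  obtain ⟨y, hy⟩ := IsCompact.nonempty_iInter_of_sequence_nonempty_isCompact_isClosed t
    (fun j => image_mono (Ici_subset_Ici.2 j.le_succ)) (fun j => ⟨c j, j, mem_Ici.2 le_rfl, rfl⟩)
    (hC.of_isClosed_subset (ht_closed 0) (by rintro _ ⟨k, -, rfl⟩; exact hcC k)) ht_closed
  obtain ⟨n, hn⟩ := mem_iUnion.1 (hcov ▸ mem_univ y)
  obtain ⟨k, hk, rfl⟩ := mem_iInter.1 hy n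
  exact (hlt k n hn).not_ge hk

end Coherent

section Sequences

variable {X : Type*} [TopologicalSpace X]

theorem isCountablyGenerated_nhds_of_mem_nhds {s : Set X} [FirstCountableTopology s] {x : X}
    (hs : s ∈ 𝓝 x) : (𝓝 x).IsCountablyGenerated := by
  rw [← nhdsWithin_eq_nhds.2 hs, ← map_nhds_subtype_val (⟨x, mem_of_mem_nhds hs⟩ : s)]
  infer_instance

theorem Filter.Tendsto.exists_injective_of_ne [T1Space X] {u : ℕ → X} {x : X}
    (hu : Tendsto u atTop (𝓝 x)) (hne : ∀ n, u n ≠ x) :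
    ∃ v : ℕ → X, Injective v ∧ range v ⊆ range u ∧ Tendsto v atTop (𝓝 x) := by
  have hx : x ∉ range u := by
    rintro ⟨n, hn⟩
    exact hne n hn
  have hinf : (range u).Infinite := fun h => by
    obtain ⟨n, hn⟩ := (hu.eventually_mem (h.isClosed.isOpen_compl.mem_nhds hx)).exists
    exact hn (mem_range_self n)
  rw [← Nat.cofinite_eq_atTop] at hu ⊢
  have hfin : ∀ U ∈ 𝓝 x, (range u \ U).Finite := fun U hU =>
    ((mem_cofinite.1 (hu hU)).image u).subset (by rintro _ ⟨⟨n, rfl⟩, hn⟩; exact ⟨n, hn, rfl⟩)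
  set e := hinf.natEmbedding
  have he : Injective fun n => (e n : X) := Subtype.val_injective.comp e.injective
  refine ⟨fun n => e n, he, by rintro _ ⟨n, rfl⟩; exact (e n).2, fun U hU => ?_⟩
  exact mem_cofinite.2 (((hfin U hU).preimage he.injOn).subset fun n hn => ⟨(e n).2, hn⟩)

theorem exists_injective_tendsto_of_notMem_nhds [T1Space X] [FrechetUrysohnSpace X]
    {s : Set X} {x : X} (hx : x ∈ s) (hs : s ∉ 𝓝 x) :
    ∃ u : ℕ → X, Injective u ∧ (∀ n, u n ∉ s) ∧ Tendsto u atTop (𝓝 x) := by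
  have hcl : x ∈ closure sᶜ := by
    rwa [closure_compl, mem_compl_iff, mem_interior_iff_mem_nhds]
  obtain ⟨u, hus, hu⟩ := mem_closure_iff_seq_limit.1 hcl
  obtain ⟨v, hv, hvu, hvx⟩ := hu.exists_injective_of_ne fun n h => hus n (h ▸ hx)
  refine ⟨v, hv, fun n => ?_, hvx⟩
  obtain ⟨k, hk⟩ := hvu (mem_range_self n)
  exact hk ▸ hus k

end Sequences

section Exhaustion

variable {X : Type*} [TopologicalSpace X] [T1Space X] [FrechetUrysohnSpace X] {K : ℕ → Set X}

theorem exists_injective_tendsto_range_subset_diff (hS : IsCoherentWith (range K))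
    (hK : Monotone K) (hKc : ∀ n, FirstCountableTopology (K n)) (hcov : ⋃ n, K n = univ) {x : X}
    (hx : ¬(𝓝 x).IsCountablyGenerated) (n : ℕ) :
    ∃ u : ℕ → X, ∃ n' > n, Injective u ∧ (∀ b, u b ≠ x) ∧ Tendsto u atTop (𝓝 x) ∧
      range u ⊆ K n' \ K n := by
  obtain ⟨n₀, hn₀⟩ := mem_iUnion.1 (hcov ▸ mem_univ x)
  have hxN : x ∈ K (max n n₀) := hK (le_max_right _ _) hn₀
  have hKN : K (max n n₀) ∉ 𝓝 x := fun h => hx (isCountablyGenerated_nhds_of_mem_nhds h)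
  obtain ⟨u, hu_inj, hu_notMem, hu⟩ := exists_injective_tendsto_of_notMem_nhds hxN hKN
  obtain ⟨n', hn'⟩ := hS.exists_subset_of_isCompact hK hcov hu.isCompact_insert_range
  refine ⟨u, max n' (n + 1), lt_max_of_lt_right n.lt_succ_self, hu_inj,
    fun b hb => hu_notMem b (hb ▸ hxN), hu, ?_⟩
  rintro _ ⟨b, rfl⟩
  exact ⟨hK (le_max_left _ _) (hn' (mem_insert_of_mem _ (mem_range_self b))),
    fun hb => hu_notMem b (hK (le_max_left _ _) hb)⟩

theorem exists_fan_of_not_isCountablyGenerated_nhds (hS : IsCoherentWith (range K))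
    (hK : Monotone K) (hKc : ∀ n, FirstCountableTopology (K n)) (hcov : ⋃ n, K n = univ) {x : X}
    (hx : ¬(𝓝 x).IsCountablyGenerated) :
    ∃ s : ℕ → ℕ → X, (∀ a, Tendsto (s a) atTop (𝓝 x)) ∧ Injective (uncurry s) ∧
      (∀ a b, s a b ≠ x) ∧ ∀ a b n, s a b ∈ K n → a < n := by
  choose u N hN hu_inj hu_ne hu_tendsto hu_range using
    exists_injective_tendsto_range_subset_diff hS hK hKc hcov hx
  set m : ℕ → ℕ := fun a => N^[a] 0
  have hm : StrictMono m := strictMono_nat_of_lt_succ fun a => by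
    simpa only [m, iterate_succ_apply'] using hN _
  have hmem : ∀ a b, u (m a) b ∈ K (m (a + 1)) := fun a b => by
    simpa only [m, iterate_succ_apply'] using (hu_range _ (mem_range_self b)).1
  have hlevel : ∀ a b n, u (m a) b ∈ K n → m a < n := fun a b n h =>
    lt_of_not_ge fun hn => (hu_range _ (mem_range_self b)).2 (hK hn h)
  refine ⟨fun a => u (m a), fun a => hu_tendsto _, ?_, fun a => hu_ne _,
    fun a b n h => (hm.id_le a).trans_lt (hlevel a b n h)⟩
  rintro ⟨a, b⟩ ⟨a', b'⟩ (h : u (m a) b = u (m a') b')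
  have ha' : a' < a + 1 := hm.lt_iff_lt.1 (hlevel a' b' _ (h ▸ hmem a b))
  have ha : a < a' + 1 := hm.lt_iff_lt.1 (hlevel a b _ (h.symm ▸ hmem a' b'))
  obtain rfl : a = a' := by omega
  rw [hu_inj _ h]

end Exhaustion

namespace Tmin

attribute [local instance] TminTop

theorem tendsto_some_nhds_none (a : ℕ) :
    Tendsto (fun b => some (a, b)) atTop (𝓝 (none : Option (ℕ × ℕ))) :=
  tendsto_nhds.2 fun U hU hnone => by
    obtain ⟨ℓ, hℓ⟩ := hU hnone
    exact eventually_atTop.2 ⟨ℓ a, hℓ a⟩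

theorem isCompact_setOf_fst_lt (n : ℕ) :
    IsCompact {p : Option (ℕ × ℕ) | ∀ q ∈ p, q.1 < n} := by
  refine ((isCompact_singleton (x := none)).union ((finite_Iio n).isCompact_biUnion fun a _ =>
    (tendsto_some_nhds_none a).isCompact_insert_range)).of_isClosed_subset ?_ ?_
  · exact isOpen_compl_iff.1 fun hnone => absurd (fun q hq => by cases hq) hnone
  · rintro (_ | ⟨a, b⟩) hp
    · exact .inl rfl
    · exact .inr (mem_biUnion (hp _ rfl) (.inr ⟨b, rfl⟩))

variable {X : Type*} {x : X} {s : ℕ → ℕ → X}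

def lift (x : X) (s : ℕ → ℕ → X) : Option (ℕ × ℕ) → X :=
  Option.elim' x (uncurry s)

theorem injective_lift (hs : Injective (uncurry s)) (hx : ∀ a b, s a b ≠ x) :
    Injective (lift x s) :=
  Option.injective_iff.2 ⟨hs, by rintro ⟨⟨a, b⟩, h⟩; exact hx a b h⟩

theorem preimage_lift_subset_setOf_fst_lt {t : Set X} {n : ℕ} (h : ∀ a b, s a b ∈ t → a < n) :
    lift x s ⁻¹' t ⊆ {p | ∀ q ∈ p, q.1 < n} := by
  rintro p hp q rfl
  exact h q.1 q.2 hp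

theorem continuous_lift [TopologicalSpace X] (hs : ∀ a, Tendsto (s a) atTop (𝓝 x)) :
    Continuous (lift x s) :=
  continuous_def.2 fun U hU hx => by
    choose ℓ hℓ using fun a => eventually_atTop.1 ((hs a).eventually_mem (hU.mem_nhds hx))
    exact ⟨ℓ, hℓ⟩

end Tmin

/-- If a Hausdorff Fréchet–Urysohn CoPolish space has a point with no countable
neighbourhood basis, then `T_min` embeds into it as a closed subspace. -/
theorem tmin_closed_embedding_of_coPolish {X : Type*} [TopologicalSpace X] [T2Space X]
    [FrechetUrysohnSpace X] (h : CoPolish X)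
    (hnc : {x : X | ¬ (nhds x).IsCountablyGenerated}.Nonempty) :
    ∃ e : Option (ℕ × ℕ) → X,
      @Topology.IsEmbedding (Option (ℕ × ℕ)) X TminTop _ e ∧ IsClosed (Set.range e) := by
  obtain ⟨K, hK, -, hKm, hcov, hcoh⟩ := h
  obtain ⟨x, hx⟩ := hnc
  have hS : IsCoherentWith (range K) := ⟨fun U hU => (hcoh U).2 fun n => hU _ ⟨n, rfl⟩⟩
  have hKc (n : ℕ) : FirstCountableTopology (K n) := by have := hKm n; infer_instance
  obtain ⟨s, hs_tendsto, hs_inj, hs_ne, hs_lt⟩ :=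
    exists_fan_of_not_isCountablyGenerated_nhds hS hK hKc hcov hx
  let _ := TminTop
  have hcont := Tmin.continuous_lift hs_tendsto
  have he : IsClosedEmbedding (Tmin.lift x s) :=
    .of_continuous_injective_isClosedMap hcont (Tmin.injective_lift hs_inj hs_ne) <|
      hS.isClosedMap hcont <| by
        rintro _ ⟨n, rfl⟩
        exact ⟨_, Tmin.isCompact_setOf_fst_lt n,
          Tmin.preimage_lift_subset_setOf_fst_lt (hs_lt · · n)⟩
  exact ⟨_, he.isEmbedding, he.isClosed_range⟩
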